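/- Let ν > 4 be finite and φ > 0, and let (y_i)_{i≥1} be an i.i.d. sequence of real random variables, each distributed according to the t-distribution t(0, φ, ν), i.e. the measure on ℝ with Lebesgue density f(x) = Γ((ν+1)/2) / (Γ(ν/2) √(π ν φ)) · (1 + x²/(ν φ))^{−(ν+1)/2}. For each n ≥ 1 let ȳ_n = (1/n)∑_{i=1}^n y_i and let Z_n = [(1/n)∑_{i=1}^n (y_i − ȳ_n)⁴] / [(1/n)∑_{i=1}^n (y_i − ȳ_n)²]² be the sample kurtosis. Then the sequence √n (Z_n − 3) diverges almost surely; more precisely, almost surely √n (Z_n − 3) → +∞ as n → ∞ (since Z_n converges almost surely to 3(ν − 2)/(ν − 4) > 3). -/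

import Mathlib

/-!
The moments `m_k = ∫ x ^ k ∂t(0, φ, ν)` with `k < ν` are finite, `m_1 = 0` by symmetry, and
integrating by parts against `x ^ (k + 1) (1 + x² / (ν φ)) ^ ((1 - ν) / 2)` gives
`(ν - k - 2) m_{k+2} = ν φ (k + 1) m_k`. Since `m_0 = 1`, the normalizing constant is never
evaluated, and `m_4 / m_2 ^ 2 = 3 (ν - 2) / (ν - 4) > 3`. By the strong law of large numbers the
sample raw moments of order `≤ 4` converge almost surely; expanding `(y_i - ȳ_n) ^ k` binomially,
the sample central moments converge to `m_2` and `m_4` because `ȳ_n → m_1 = 0`. Hence `Z_n` tends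
to `m_4 / m_2 ^ 2 > 3` and `√n (Z_n - 3) → ∞`.
-/

open MeasureTheory ProbabilityTheory Filter Real Topology Finset

/-- The `t`-distribution `t(0, φ, ν)`: the measure on `ℝ` with Lebesgue density
`Γ((ν+1)/2) / (Γ(ν/2) √(π ν φ)) · (1 + x²/(ν φ))^{-(ν+1)/2}`. -/
noncomputable def tMeasure (φ ν : ℝ) : Measure ℝ :=
  volume.withDensity fun x => ENNReal.ofReal
    (Real.Gamma ((ν + 1) / 2) / (Real.Gamma (ν / 2) * Real.sqrt (Real.pi * ν * φ)) *
      (1 + x ^ 2 / (ν * φ)) ^ (-((ν + 1) / 2)))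

section StudentKernel

variable {c q : ℝ}

lemma one_add_sq_div_pos (hc : 0 < c) (x : ℝ) : 0 < 1 + x ^ 2 / c := by positivity

lemma abs_pow_mul_rpow_neg_le (hc : 0 < c) (hq : 0 ≤ q) (k : ℕ) (x : ℝ) :
    |x ^ k * (1 + x ^ 2 / c) ^ (-q)| ≤ (2 * max 1 c) ^ q * (1 + |x|) ^ ((k : ℝ) - 2 * q) := by
  set M := 2 * max 1 c
  have hu : 0 < 1 + |x| := by positivity
  have hM : 0 < M := by positivity
  have hv := one_add_sq_div_pos hc x
  have hsq : (1 + |x|) ^ 2 / M ≤ 1 + x ^ 2 / c := by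
    have hx2 : x ^ 2 ≤ max 1 c * (x ^ 2 / c) := by
      rw [← mul_div_assoc, le_div_iff₀ hc]
      nlinarith [le_max_right 1 c, sq_nonneg x]
    rw [div_le_iff₀ hM]
    nlinarith [sq_nonneg (1 - |x|), sq_abs x, le_max_left 1 c]
  calc |x ^ k * (1 + x ^ 2 / c) ^ (-q)| = |x| ^ k * (1 + x ^ 2 / c) ^ (-q) := by
        rw [abs_mul, abs_pow, abs_of_pos (rpow_pos_of_pos hv _)]
    _ ≤ (1 + |x|) ^ k * ((1 + |x|) ^ 2 / M) ^ (-q) := by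
        gcongr ?_ * ?_
        · exact pow_le_pow_left₀ (abs_nonneg x) (by linarith) k
        · exact rpow_le_rpow_of_nonpos (by positivity) hsq (neg_nonpos.2 hq)
    _ = M ^ q * (1 + |x|) ^ ((k : ℝ) - 2 * q) := by
        rw [div_rpow (by positivity) hM.le, rpow_neg hM.le, div_inv_eq_mul, ← rpow_natCast,
          ← rpow_natCast, ← rpow_mul hu.le, rpow_sub hu, Nat.cast_ofNat, mul_neg,
          rpow_neg (by positivity)]
        field_simp

lemma continuous_pow_mul_rpow_neg (hc : 0 < c) (q : ℝ) (k : ℕ) :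
    Continuous fun x : ℝ => x ^ k * (1 + x ^ 2 / c) ^ (-q) :=
  (continuous_pow k).mul <| (by fun_prop : Continuous fun x : ℝ => 1 + x ^ 2 / c).rpow_const
    fun x => Or.inl (one_add_sq_div_pos hc x).ne'

lemma integrable_pow_mul_rpow_neg (hc : 0 < c) {k : ℕ} (hk : k + 1 < 2 * q) :
    Integrable fun x : ℝ => x ^ k * (1 + x ^ 2 / c) ^ (-q) := by
  have hbound : Integrable fun x : ℝ => (2 * max 1 c) ^ q * (1 + ‖x‖) ^ (-(2 * q - k)) :=
    (integrable_one_add_norm (by rw [Module.finrank_self]; push_cast; linarith)).const_mul _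
  refine hbound.mono' (continuous_pow_mul_rpow_neg hc q k).aestronglyMeasurable
    (.of_forall fun x => ?_)
  rw [norm_eq_abs, norm_eq_abs, neg_sub]
  exact abs_pow_mul_rpow_neg_le hc (by linarith) k x

lemma tendsto_pow_mul_rpow_neg_cocompact (hc : 0 < c) {k : ℕ} (hk : k < 2 * q) :
    Tendsto (fun x : ℝ => x ^ k * (1 + x ^ 2 / c) ^ (-q)) (cocompact ℝ) (𝓝 0) := by
  have hbound : Tendsto (fun x : ℝ => (2 * max 1 c) ^ q * (1 + ‖x‖) ^ (-(2 * q - k)))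
      (cocompact ℝ) (𝓝 ((2 * max 1 c) ^ q * 0)) :=
    ((tendsto_rpow_neg_atTop (by linarith)).comp
      (tendsto_atTop_add_const_left _ 1 tendsto_norm_cocompact_atTop)).const_mul _
  rw [mul_zero] at hbound
  refine squeeze_zero_norm (fun x => ?_) hbound
  rw [norm_eq_abs, norm_eq_abs, neg_sub]
  exact abs_pow_mul_rpow_neg_le hc (by linarith) k x

lemma hasDerivAt_pow_succ_mul_rpow (hc : 0 < c) (q : ℝ) (k : ℕ) (x : ℝ) :
    HasDerivAt (fun x : ℝ => x ^ (k + 1) * (1 + x ^ 2 / c) ^ (1 - q))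
      ((k + 1) * (x ^ k * (1 + x ^ 2 / c) ^ (-q))
        - (2 * q - k - 3) / c * (x ^ (k + 2) * (1 + x ^ 2 / c) ^ (-q))) x := by
  have hv := one_add_sq_div_pos hc x
  have hinner : HasDerivAt (fun x : ℝ => 1 + x ^ 2 / c) (2 * x / c) x := by
    simpa using ((hasDerivAt_pow 2 x).div_const c).const_add 1
  refine ((hasDerivAt_pow (k + 1) x).mul
    (hinner.rpow_const (p := 1 - q) (Or.inl hv.ne'))).congr_deriv ?_
  rw [sub_sub_cancel_left, show 1 - q = 1 + -q by ring, rpow_add hv, rpow_one]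
  push_cast
  field_simp
  ring

/-- Integration by parts against `x ^ (k + 1) * (1 + x ^ 2 / c) ^ (1 - q)`, which vanishes at
`±∞` when `k + 3 < 2 q`. -/
lemma integral_pow_add_two_mul_rpow_neg (hc : 0 < c) {k : ℕ} (hk : k + 3 < 2 * q) :
    (2 * q - k - 3) * ∫ x : ℝ, x ^ (k + 2) * (1 + x ^ 2 / c) ^ (-q)
      = c * (k + 1) * ∫ x : ℝ, x ^ k * (1 + x ^ 2 / c) ^ (-q) := by
  have hint₀ := integrable_pow_mul_rpow_neg hc (k := k) (q := q) (by linarith)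
  have hint₂ := integrable_pow_mul_rpow_neg hc (k := k + 2) (q := q) (by push_cast; linarith)
  have hlim := tendsto_pow_mul_rpow_neg_cocompact hc (k := k + 1) (q := q - 1)
    (by push_cast; linarith)
  rw [cocompact_eq_atBot_atTop, tendsto_sup, neg_sub] at hlim
  have hibp := integral_of_hasDerivAt_of_tendsto (hasDerivAt_pow_succ_mul_rpow hc q k)
    ((hint₀.const_mul _).sub (hint₂.const_mul _)) hlim.1 hlim.2
  rw [integral_sub (hint₀.const_mul _) (hint₂.const_mul _), integral_const_mul,
    integral_const_mul, sub_zero, sub_eq_zero, div_mul_eq_mul_div, eq_div_iff hc.ne'] at hibp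
  linarith

lemma integral_eq_zero_of_odd {f : ℝ → ℝ} (hf : ∀ x, f (-x) = -f x) : ∫ x, f x = 0 := by
  have h := integral_neg_eq_self f volume
  simp only [hf, integral_neg] at h
  linarith

end StudentKernel

noncomputable def tNormConst (φ ν : ℝ) : ℝ :=
  Real.Gamma ((ν + 1) / 2) / (Real.Gamma (ν / 2) * Real.sqrt (Real.pi * ν * φ))

section TDistribution

variable {φ ν : ℝ}

lemma tNormConst_pos (hφ : 0 < φ) (hν : 0 < ν) : 0 < tNormConst φ ν := by
  have := Real.Gamma_pos_of_pos (by linarith : 0 < (ν + 1) / 2)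
  have := Real.Gamma_pos_of_pos (by linarith : 0 < ν / 2)
  have : 0 < Real.sqrt (Real.pi * ν * φ) := Real.sqrt_pos.2 (by positivity)
  unfold tNormConst
  positivity

lemma tMeasure_eq_withDensity (φ ν : ℝ) : tMeasure φ ν = volume.withDensity fun x =>
    ENNReal.ofReal (tNormConst φ ν * (1 + x ^ 2 / (ν * φ)) ^ (-((ν + 1) / 2))) := rfl

lemma tNormConst_mul_rpow_nonneg (hφ : 0 < φ) (hν : 0 < ν) (x : ℝ) :
    0 ≤ tNormConst φ ν * (1 + x ^ 2 / (ν * φ)) ^ (-((ν + 1) / 2)) :=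
  mul_nonneg (tNormConst_pos hφ hν).le
    (rpow_pos_of_pos (one_add_sq_div_pos (by positivity) x) _).le

lemma integral_tMeasure (hφ : 0 < φ) (hν : 0 < ν) (f : ℝ → ℝ) :
    ∫ x, f x ∂tMeasure φ ν
      = tNormConst φ ν * ∫ x, f x * (1 + x ^ 2 / (ν * φ)) ^ (-((ν + 1) / 2)) := by
  rw [tMeasure_eq_withDensity, integral_withDensity_eq_integral_toReal_smul (by fun_prop)
    (.of_forall fun _ => ENNReal.ofReal_lt_top), ← integral_const_mul]
  simp only [ENNReal.toReal_ofReal (tNormConst_mul_rpow_nonneg hφ hν _), smul_eq_mul, mul_assoc,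
    mul_comm (f _)]

lemma integrable_tMeasure_iff (hφ : 0 < φ) (hν : 0 < ν) {f : ℝ → ℝ} :
    Integrable f (tMeasure φ ν)
      ↔ Integrable fun x => f x * (1 + x ^ 2 / (ν * φ)) ^ (-((ν + 1) / 2)) := by
  rw [tMeasure_eq_withDensity, integrable_withDensity_iff_integrable_smul' (by fun_prop)
    (.of_forall fun _ => ENNReal.ofReal_lt_top)]
  simp only [ENNReal.toReal_ofReal (tNormConst_mul_rpow_nonneg hφ hν _), smul_eq_mul, mul_assoc,
    mul_comm (f _)]
  exact integrable_const_mul_iff (tNormConst_pos hφ hν).ne'.isUnit _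

lemma integrable_pow_tMeasure (hφ : 0 < φ) (hν : 0 < ν) {k : ℕ} (hk : k < ν) :
    Integrable (fun x => x ^ k) (tMeasure φ ν) := by
  rw [integrable_tMeasure_iff hφ hν]
  exact integrable_pow_mul_rpow_neg (by positivity) (k := k) (q := (ν + 1) / 2) (by linarith)

lemma integral_id_tMeasure (hφ : 0 < φ) (hν : 0 < ν) : ∫ x, x ∂tMeasure φ ν = 0 := by
  rw [integral_tMeasure hφ hν, integral_eq_zero_of_odd fun x => by rw [neg_sq, neg_mul],
    mul_zero]

lemma integral_pow_add_two_tMeasure (hφ : 0 < φ) {k : ℕ} (hk : k + 2 < ν) :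
    (ν - k - 2) * ∫ x, x ^ (k + 2) ∂tMeasure φ ν
      = ν * φ * (k + 1) * ∫ x, x ^ k ∂tMeasure φ ν := by
  have hν : 0 < ν := by linarith
  have h := integral_pow_add_two_mul_rpow_neg (c := ν * φ) (q := (ν + 1) / 2) (by positivity)
    (k := k) (by linarith)
  rw [integral_tMeasure hφ hν, integral_tMeasure hφ hν]
  linear_combination tNormConst φ ν * h

variable [IsProbabilityMeasure (tMeasure φ ν)]

lemma integral_sq_tMeasure (hφ : 0 < φ) (hν : 2 < ν) :
    ∫ x, x ^ 2 ∂tMeasure φ ν = ν * φ / (ν - 2) := by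
  have h := integral_pow_add_two_tMeasure hφ (k := 0) (by simpa using hν)
  simp only [pow_zero, integral_const, probReal_univ, smul_eq_mul] at h
  rw [eq_div_iff (by linarith)]
  linear_combination h

lemma tMeasure_kurtosis (hφ : 0 < φ) (hν : 4 < ν) :
    (∫ x, x ^ 4 ∂tMeasure φ ν) / (∫ x, x ^ 2 ∂tMeasure φ ν) ^ 2 = 3 * (ν - 2) / (ν - 4) := by
  have h := integral_pow_add_two_tMeasure hφ (k := 2) (by push_cast; linarith)
  rw [integral_sq_tMeasure hφ (by linarith)] at h ⊢
  have : 0 < ν - 4 := by linarith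
  have : 0 < ν - 2 := by linarith
  have : 0 < ν * φ := by positivity
  push_cast at h
  field_simp at h ⊢
  linear_combination h

end TDistribution

noncomputable def sampleMoment (x : ℕ → ℝ) (k n : ℕ) : ℝ := (∑ i ∈ range n, x i ^ k) / n

noncomputable def sampleCentralMoment (x : ℕ → ℝ) (k n : ℕ) : ℝ :=
  (∑ i ∈ range n, (x i - sampleMoment x 1 n) ^ k) / n

lemma sum_sub_pow_div_eq (x : ℕ → ℝ) (a : ℝ) (k n : ℕ) :
    (∑ i ∈ range n, (x i - a) ^ k) / n
      = ∑ j ∈ range (k + 1), (-a) ^ (k - j) * k.choose j * sampleMoment x j n := by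
  simp only [sub_eq_add_neg, add_pow, sampleMoment, sum_div, mul_sum]
  rw [sum_comm]
  exact sum_congr rfl fun j _ => sum_congr rfl fun i _ => by ring

lemma tendsto_sampleCentralMoment {x : ℕ → ℝ} {μ : ℕ → ℝ} {k : ℕ}
    (hmean : Tendsto (sampleMoment x 1) atTop (𝓝 0))
    (hM : ∀ j ≤ k, Tendsto (sampleMoment x j) atTop (𝓝 (μ j))) :
    Tendsto (sampleCentralMoment x k) atTop (𝓝 (μ k)) := by
  have hlim : μ k = ∑ j ∈ range (k + 1), (-0 : ℝ) ^ (k - j) * k.choose j * μ j := by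
    rw [sum_eq_single_of_mem k (self_mem_range_succ k) fun j hj hjk => ?_]
    · simp
    · rw [neg_zero, zero_pow (by have := mem_range.1 hj; omega), zero_mul, zero_mul]
  rw [hlim]
  refine (tendsto_finsetSum _ fun j hj => ?_).congr fun n => (sum_sub_pow_div_eq x _ k n).symm
  exact ((hmean.neg.pow _).mul_const _).mul (hM j (Nat.lt_succ_iff.1 (mem_range.1 hj)))

theorem strong_law_ae_comp {Ω α : Type*} [MeasurableSpace Ω] [MeasurableSpace α] {P : Measure Ω}
    {μ : Measure α} {y : ℕ → Ω → α} (hmeas : ∀ i, Measurable (y i)) (hindep : iIndepFun y P)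
    (hdist : ∀ i, P.map (y i) = μ) {f : α → ℝ} (hf : Measurable f) (hint : Integrable f μ) :
    ∀ᵐ ω ∂P, Tendsto (fun n : ℕ => (∑ i ∈ range n, f (y i ω)) / n) atTop (𝓝 (∫ x, f x ∂μ)) := by
  have hident : ∀ i, IdentDistrib (f ∘ y i) (f ∘ y 0) P P := fun i =>
    (IdentDistrib.mk (hmeas i).aemeasurable (hmeas 0).aemeasurable (by rw [hdist, hdist])).comp hf
  have hint₀ : Integrable (f ∘ y 0) P :=
    (integrable_map_measure hf.aestronglyMeasurable (hmeas 0).aemeasurable).1 (hdist 0 ▸ hint)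
  have hmean : ∫ ω, f (y 0 ω) ∂P = ∫ x, f x ∂μ := by
    rw [← hdist 0, integral_map (hmeas 0).aemeasurable hf.aestronglyMeasurable]
  simpa only [Function.comp_apply, hmean] using strong_law_ae_real (fun i => f ∘ y i) hint₀
    (fun i j hij => (hindep.indepFun hij).comp hf hf) hident

/-- For an i.i.d. sequence from `t(0, φ, ν)` with finite `ν > 4`, the sequence `√n (Z_n - 3)`
built from the sample kurtosis `Z_n` diverges almost surely to `+∞`. -/
theorem t_sample_kurtosis_statistic_ae_diverges
    {Ω : Type*} [MeasurableSpace Ω] (P : Measure Ω) [IsProbabilityMeasure P]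
    (ν φ : ℝ) (hν : 4 < ν) (hφ : 0 < φ)
    (y : ℕ → Ω → ℝ)
    (hmeas : ∀ i, Measurable (y i))
    (hindep : iIndepFun y P)
    (hdist : ∀ i, P.map (y i) = tMeasure φ ν)
    (ybar : ℕ → Ω → ℝ)
    (hybar : ∀ n ω, ybar n ω = (∑ i ∈ Finset.range n, y i ω) / n)
    (Z : ℕ → Ω → ℝ)
    (hZ : ∀ n ω, Z n ω =
      ((∑ i ∈ Finset.range n, (y i ω - ybar n ω) ^ 4) / n) /
        ((∑ i ∈ Finset.range n, (y i ω - ybar n ω) ^ 2) / n) ^ 2) :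
    ∀ᵐ ω ∂P, Tendsto (fun n : ℕ => Real.sqrt n * (Z n ω - 3)) atTop atTop := by
  have hν₀ : 0 < ν := by linarith
  have : IsProbabilityMeasure (tMeasure φ ν) :=
    hdist 0 ▸ Measure.isProbabilityMeasure_map (hmeas 0).aemeasurable
  have hmoments : ∀ᵐ ω ∂P, ∀ j ∈ Set.Iic 4,
      Tendsto (sampleMoment (y · ω) j) atTop (𝓝 (∫ x, x ^ j ∂tMeasure φ ν)) :=
    (eventually_all_finite (Set.finite_Iic 4)).2 fun j hj =>
      strong_law_ae_comp hmeas hindep hdist (measurable_id.pow_const j)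
        (integrable_pow_tMeasure hφ hν₀ ((Nat.cast_le.2 hj).trans_lt (by exact_mod_cast hν)))
  filter_upwards [hmoments] with ω hω
  have hmean : Tendsto (sampleMoment (y · ω) 1) atTop (𝓝 0) := by
    simpa only [pow_one, integral_id_tMeasure hφ hν₀] using hω 1 (by norm_num)
  have hcentral (k : ℕ) (hk : k ≤ 4) :=
    tendsto_sampleCentralMoment hmean fun j hj => hω j (hj.trans hk)
  have hZlim : Tendsto (Z · ω) atTop (𝓝 (3 * (ν - 2) / (ν - 4))) := by
    rw [← tMeasure_kurtosis hφ hν]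
    refine ((hcentral 4 le_rfl).div ((hcentral 2 (by norm_num)).pow 2) ?_).congr fun n => ?_
    · rw [integral_sq_tMeasure hφ (by linarith)]
      have : 0 < ν - 2 := by linarith
      positivity
    · simp only [Pi.div_apply, hZ, hybar, sampleCentralMoment, sampleMoment, pow_one]
  have hkurt : 3 < 3 * (ν - 2) / (ν - 4) := by
    rw [lt_div_iff₀ (by linarith)]
    linarith
  exact (tendsto_sqrt_atTop.comp tendsto_natCast_atTop_atTop).atTop_mul_pos (sub_pos.2 hkurt)
    (hZlim.sub_const 3)
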